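/- For all i ∈ {1,…,J} and j ∈ {1,…,K}: Σ_{k,ℓ=1}^n (2/(λ_k+λ_ℓ)) ⟨v_k, Pθ_i v_ℓ⟩ ⟨v_ℓ, Pφ_j v_k⟩ = i·Tr[[Φ_θ(G_i), Ψ_φ†(H_j)] ρ(θ)]; that is, the Fisher–Bures information matrix elements of the evolved quantum Boltzmann machine with respect to mixed θ and φ parameters are I^FB_{ij}(θ,φ) = i⟨[Φ_θ(G_i),Ψ_φ†(H_j)]⟩_{ρ(θ)}. -/

import Mathlib

/-
In the eigenbasis `v_k = exp(−iH(φ)) u_k` of `ω(θ,φ)`, write `A` and `B` for the matrices of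
`X = exp(−iH(φ)) Φ_θ(G_i) exp(iH(φ))` and `Y = Ψ_φ(H_j)`. Then `Pθ_i` has entries
`−½(λ_k + λ_l) A_kl + c λ_k δ_kl` and `Pφ_j` has entries `i(λ_l − λ_k) B_lk`: the weight
`2/(λ_k + λ_l)` cancels the anticommutator, the commutator kills the diagonal term, and the sum is
`i Σ (λ_k − λ_l) A_kl B_lk = i Tr([A, B] diag λ) = i Tr([X, Y] ω)`. Finally conjugation by the
unitary `exp(−iH(φ))` carries `Φ_θ(G_i)`, `Ψ_φ†(H_j)` and `ρ(θ)` to `X`, `Y` and `ω`; for `Y`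
this is the substitution `t ↦ 1 − t` in the integral defining `Ψ_φ`.
-/

open MeasureTheory Matrix

noncomputable section

attribute [local instance] Matrix.normedAddCommGroup Matrix.normedSpace

/-- Square complex matrices. -/
abbrev Mat (n : ℕ) := Matrix (Fin n) (Fin n) ℂ

/-- The parameterized Hamiltonian `G(θ) = ∑ j, θ j • G j`. -/
def Gm {n J : ℕ} (G : Fin J → Mat n) (θ : Fin J → ℝ) : Mat n := ∑ j, (θ j : ℂ) • G j

/-- The parameterized Hamiltonian `H(φ) = ∑ k, φ k • H k`. -/
def Hm {n K : ℕ} (H : Fin K → Mat n) (φ : Fin K → ℝ) : Mat n := ∑ k, (φ k : ℂ) • H k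

/-- The partition function `Z(θ) = Tr[exp (−G(θ))]` (a positive real). -/
def Zpf {n J : ℕ} (G : Fin J → Mat n) (θ : Fin J → ℝ) : ℝ :=
  (Matrix.trace (NormedSpace.exp (-(Gm G θ)))).re

/-- The quantum Boltzmann machine `ρ(θ) = exp(−G(θ))/Z(θ)`. -/
def qbm {n J : ℕ} (G : Fin J → Mat n) (θ : Fin J → ℝ) : Mat n :=
  ((Zpf G θ : ℂ))⁻¹ • NormedSpace.exp (-(Gm G θ))

/-- The unitary `exp(−i H(φ))`. -/
def uH {n K : ℕ} (H : Fin K → Mat n) (φ : Fin K → ℝ) : Mat n :=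
  NormedSpace.exp (-(Complex.I • Hm H φ))

/-- The unitary `exp(i H(φ))`. -/
def uH' {n K : ℕ} (H : Fin K → Mat n) (φ : Fin K → ℝ) : Mat n :=
  NormedSpace.exp (Complex.I • Hm H φ)

/-- The evolved quantum Boltzmann machine `ω(θ,φ) = exp(−iH(φ)) ρ(θ) exp(iH(φ))`. -/
def eqbm {n J K : ℕ} (G : Fin J → Mat n) (H : Fin K → Mat n)
    (θ : Fin J → ℝ) (φ : Fin K → ℝ) : Mat n :=
  uH H φ * qbm G θ * uH' H φ

/-- The high-peak-tent probability density `p(t) = (2/π) ln |coth (π t / 2)|`. -/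
def hpt (t : ℝ) : ℝ :=
  (2 / Real.pi) * Real.log |Real.cosh (Real.pi * t / 2) / Real.sinh (Real.pi * t / 2)|

/-- The channel `Φ_θ(X) = ∫ℝ p(t) exp(−iG(θ)t) X exp(iG(θ)t) dt`. -/
def chanΦ {n J : ℕ} (G : Fin J → Mat n) (θ : Fin J → ℝ) (X : Mat n) : Mat n :=
  ∫ t : ℝ, hpt t •
    (NormedSpace.exp ((-(Complex.I * (t : ℂ))) • Gm G θ) * X *
      NormedSpace.exp ((Complex.I * (t : ℂ)) • Gm G θ))

/-- The channel `Ψ_φ(X) = ∫₀¹ exp(−iH(φ)t) X exp(iH(φ)t) dt`. -/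
def chanΨ {n K : ℕ} (H : Fin K → Mat n) (φ : Fin K → ℝ) (X : Mat n) : Mat n :=
  ∫ t in (0:ℝ)..1,
    (NormedSpace.exp ((-(Complex.I * (t : ℂ))) • Hm H φ) * X *
      NormedSpace.exp ((Complex.I * (t : ℂ)) • Hm H φ))

/-- The adjoint channel `Ψ_φ†(X) = ∫₀¹ exp(iH(φ)t) X exp(−iH(φ)t) dt`. -/
def chanΨdag {n K : ℕ} (H : Fin K → Mat n) (φ : Fin K → ℝ) (X : Mat n) : Mat n :=
  ∫ t in (0:ℝ)..1,
    (NormedSpace.exp ((Complex.I * (t : ℂ)) • Hm H φ) * X *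
      NormedSpace.exp ((-(Complex.I * (t : ℂ))) • Hm H φ))

/-- `⟨x, y⟩ = ∑ m, conj (x m) * y m`. -/
def dotc {n : ℕ} (x y : Fin n → ℂ) : ℂ := ∑ m, (starRingEnd ℂ) (x m) * y m

/-- The eigenvalues `λ_k = exp(−μ_k)/(∑_m exp(−μ_m))` of `ρ(θ)`. -/
def lamd {n : ℕ} (μ : Fin n → ℝ) (k : Fin n) : ℝ := Real.exp (-μ k) / ∑ m, Real.exp (-μ m)

/-- The partial derivative of `ω(θ,φ)` with respect to `θ_j`:
`Pθ_j = −(1/2){exp(−iH(φ)) Φ_θ(G_j) exp(iH(φ)), ω(θ,φ)} + ⟨G_j⟩_{ρ(θ)} ω(θ,φ)`. -/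
def Pθ {n J K : ℕ} (G : Fin J → Mat n) (H : Fin K → Mat n)
    (θ : Fin J → ℝ) (φ : Fin K → ℝ) (j : Fin J) : Mat n :=
  -(1 / 2 : ℂ) •
      (uH H φ * chanΦ G θ (G j) * uH' H φ * eqbm G H θ φ
        + eqbm G H θ φ * (uH H φ * chanΦ G θ (G j) * uH' H φ))
    + Matrix.trace (G j * qbm G θ) • eqbm G H θ φ

/-- The partial derivative of `ω(θ,φ)` with respect to `φ_k`: `Pφ_k = i[ω(θ,φ), Ψ_φ(H_k)]`. -/
def Pφ {n J K : ℕ} (G : Fin J → Mat n) (H : Fin K → Mat n)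
    (θ : Fin J → ℝ) (φ : Fin K → ℝ) (k : Fin K) : Mat n :=
  Complex.I • (eqbm G H θ φ * chanΨ H φ (H k) - chanΨ H φ (H k) * eqbm G H θ φ)

/-- The coefficient `c(x,y) = (ln x − ln y)/(x − y)` for `x ≠ y`, and `c(x,x) = 1/x`. -/
def cKM (x y : ℝ) : ℝ := if x = y then 1 / x else (Real.log x - Real.log y) / (x - y)

open Complex

theorem ContinuousLinearEquiv.intervalIntegral_comp_comm {𝕜 E F : Type*} [RCLike 𝕜]
    [NormedAddCommGroup E] [NormedSpace ℝ E] [NormedSpace 𝕜 E]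
    [NormedAddCommGroup F] [NormedSpace ℝ F] [NormedSpace 𝕜 F]
    (L : E ≃L[𝕜] F) (f : ℝ → E) (a b : ℝ) :
    ∫ t in a..b, L (f t) = L (∫ t in a..b, f t) := by
  simp only [intervalIntegral, L.integral_comp_comm, map_sub]

section FisherBures

variable {ι : Type*} [Fintype ι] [DecidableEq ι]

theorem sum_fisherBures_diagonal (lam : ι → ℝ) (hlam : ∀ k, 0 < lam k)
    (A B : Matrix ι ι ℂ) (c : ℂ) :
    ∑ k, ∑ l, ((2 / (lam k + lam l) : ℝ) : ℂ) *
        (-(1 / 2 : ℂ) • (A * diagonal (ofReal ∘ lam) + diagonal (ofReal ∘ lam) * A)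
          + c • diagonal (ofReal ∘ lam)) k l *
        (I • (diagonal (ofReal ∘ lam) * B - B * diagonal (ofReal ∘ lam))) l k
      = I * trace ((A * B - B * A) * diagonal (ofReal ∘ lam)) := by
  have hterm : ∀ k l, ((2 / (lam k + lam l) : ℝ) : ℂ) *
        (-(1 / 2 : ℂ) • (A * diagonal (ofReal ∘ lam) + diagonal (ofReal ∘ lam) * A)
          + c • diagonal (ofReal ∘ lam)) k l *
        (I • (diagonal (ofReal ∘ lam) * B - B * diagonal (ofReal ∘ lam))) l k
      = I * (A k l * B l k * lam k - B l k * A k l * lam l) := by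
    intro k l
    have hpos : ((lam k : ℂ) + lam l) ≠ 0 := by exact_mod_cast (add_pos (hlam k) (hlam l)).ne'
    simp only [Matrix.add_apply, Matrix.sub_apply, Matrix.smul_apply, mul_diagonal, diagonal_mul,
      smul_eq_mul, diagonal_apply, Function.comp_apply]
    split_ifs with hkl
    · subst hkl; ring
    · push_cast; field_simp; ring
  simp only [hterm, trace, diag_apply, Matrix.sub_mul, Matrix.sub_apply, mul_diagonal,
    Function.comp_apply, ← Finset.mul_sum, Finset.sum_sub_distrib]
  simp only [mul_apply, Finset.sum_mul]
  rw [Finset.sum_comm (f := fun k l => B l k * A k l * lam l)]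

theorem trace_conjStarAlgAut {R : Type*} [CommSemiring R] [StarRing R]
    (u : unitary (Matrix ι ι R)) (M : Matrix ι ι R) :
    trace (Unitary.conjStarAlgAut R _ u M) = trace M := by
  rw [Unitary.conjStarAlgAut_apply, trace_mul_cycle, Unitary.coe_star_mul_self, Matrix.one_mul]

theorem sum_fisherBures_of_mul_eq_mul_diagonal {V ω : Matrix ι ι ℂ} (hV : V ∈ unitaryGroup ι ℂ)
    {lam : ι → ℝ} (hlam : ∀ k, 0 < lam k) (hωV : ω * V = V * diagonal (ofReal ∘ lam))
    (X Y : Matrix ι ι ℂ) (c : ℂ) :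
    ∑ k, ∑ l, ((2 / (lam k + lam l) : ℝ) : ℂ) *
        (Vᴴ * (-(1 / 2 : ℂ) • (X * ω + ω * X) + c • ω) * V) k l *
        (Vᴴ * (I • (ω * Y - Y * ω)) * V) l k
      = I * trace ((X * Y - Y * X) * ω) := by
  set ψ := Unitary.conjStarAlgAut ℂ (Matrix ι ι ℂ) (star ⟨V, hV⟩)
  have hψ : ∀ M, Vᴴ * M * V = ψ M := fun M => by
    simp [ψ, star_eq_conjTranspose]
  have hψω : ψ ω = diagonal (ofReal ∘ lam) := by
    rw [← hψ, Matrix.mul_assoc, hωV, ← Matrix.mul_assoc, ← star_eq_conjTranspose,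
      Unitary.star_mul_self_of_mem hV, Matrix.one_mul]
  simp only [hψ, map_add, map_smul, map_mul, map_sub, hψω]
  rw [sum_fisherBures_diagonal lam hlam, ← hψω, ← map_mul, ← map_mul, ← map_sub, ← map_mul,
    trace_conjStarAlgAut]

end FisherBures

section MatrixExp

variable {ι : Type*} [Fintype ι] [DecidableEq ι]

theorem mul_intervalIntegral_mul_of_mul_eq_one {A B : Matrix ι ι ℂ} (hAB : A * B = 1)
    (hBA : B * A = 1) (f : ℝ → Matrix ι ι ℂ) (a b : ℝ) :
    A * (∫ t in a..b, f t) * B = ∫ t in a..b, A * f t * B := by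
  let L : Matrix ι ι ℂ ≃L[ℂ] Matrix ι ι ℂ :=
    (MulSemiringAction.toAlgEquiv ℂ (Matrix ι ι ℂ)
      (ConjAct.toConjAct (⟨A, B, hAB, hBA⟩ : (Matrix ι ι ℂ)ˣ))).toLinearEquiv.toContinuousLinearEquiv
  have hL : ∀ X, L X = A * X * B := fun X => rfl
  simp only [← hL]
  exact (L.intervalIntegral_comp_comm f a b).symm

theorem exp_smul_mul_exp_smul (M : Matrix ι ι ℂ) (a b : ℂ) :
    NormedSpace.exp (a • M) * NormedSpace.exp (b • M) = NormedSpace.exp ((a + b) • M) := by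
  rw [add_smul, Matrix.exp_add_of_commute _ _ (((Commute.refl M).smul_left a).smul_right b)]

theorem exp_mul_eq_mul_exp_of_mul_eq_mul {𝔸 : Type*} [NormedCommRing 𝔸] [NormedAlgebra ℚ 𝔸]
    [CompleteSpace 𝔸] {V M D : Matrix ι ι 𝔸} (hV : IsUnit V) (h : M * V = V * D) :
    NormedSpace.exp M * V = V * NormedSpace.exp D := by
  have hM : M = V * D * V⁻¹ := by
    rw [← h, Matrix.mul_assoc, mul_nonsing_inv _ ((isUnit_iff_isUnit_det V).mp hV), Matrix.mul_one]
  rw [hM, exp_conj _ _ hV, Matrix.mul_assoc, nonsing_inv_mul _ ((isUnit_iff_isUnit_det V).mp hV),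
    Matrix.mul_one]

theorem mul_eq_mul_diagonal_of_mulVec_eq_smul {R : Type*} [CommSemiring R] {M : Matrix ι ι R}
    {u : ι → ι → R} {d : ι → R} (h : ∀ k, M *ᵥ u k = d k • u k) :
    M * (of u)ᵀ = (of u)ᵀ * diagonal d := by
  ext r k
  rw [mul_diagonal, mul_apply]
  simpa [mulVec, dotProduct, mul_comm] using congrFun (h k) r

end MatrixExp

section EvolvedBoltzmann

variable {n K : ℕ} {H : Fin K → Mat n} (φ : Fin K → ℝ)

variable (H) in
theorem uH_mul_uH' : uH H φ * uH' H φ = 1 := by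
  rw [uH, uH', ← neg_smul, exp_smul_mul_exp_smul, neg_add_cancel, zero_smul, NormedSpace.exp_zero]

variable (H) in
theorem uH'_mul_uH : uH' H φ * uH H φ = 1 := by
  rw [uH, uH', ← neg_smul, exp_smul_mul_exp_smul, add_neg_cancel, zero_smul, NormedSpace.exp_zero]

variable (H) in
theorem uH_mul_chanΨdag_mul_uH' (X : Mat n) :
    uH H φ * chanΨdag H φ X * uH' H φ = chanΨ H φ X := by
  have hflip := intervalIntegral.integral_comp_sub_left (a := 0) (b := 1)
    (fun t : ℝ => NormedSpace.exp ((-(I * t)) • Hm H φ) * X * NormedSpace.exp ((I * t) • Hm H φ)) 1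
  rw [sub_self, sub_zero] at hflip
  rw [chanΨdag, mul_intervalIntegral_mul_of_mul_eq_one (uH_mul_uH' H φ) (uH'_mul_uH H φ), chanΨ,
    ← hflip]
  refine intervalIntegral.integral_congr fun t _ => ?_
  simp only [uH, uH', ← Matrix.mul_assoc, ← neg_smul]
  rw [exp_smul_mul_exp_smul, Matrix.mul_assoc _ _ (NormedSpace.exp (I • Hm H φ)),
    exp_smul_mul_exp_smul]
  push_cast
  rw [show -I + I * t = -(I * (1 - t)) by ring, show -(I * t) + I = I * (1 - t) by ring]

theorem isSelfAdjoint_Hm (hH : ∀ k, (H k).IsHermitian) : IsSelfAdjoint (Hm H φ) :=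
  isSelfAdjoint_sum _ fun k _ => IsSelfAdjoint.smul (conj_ofReal (φ k)) (hH k).isSelfAdjoint

theorem star_uH (hH : ∀ k, (H k).IsHermitian) : star (uH H φ) = uH' H φ := by
  rw [uH, uH', NormedSpace.star_exp, star_neg, star_smul, (isSelfAdjoint_Hm φ hH).star_eq,
    star_def, conj_I, neg_smul, neg_neg]

theorem uH_mem_unitaryGroup (hH : ∀ k, (H k).IsHermitian) : uH H φ ∈ unitaryGroup (Fin n) ℂ := by
  rw [mem_unitaryGroup_iff', star_uH φ hH, uH'_mul_uH]

theorem conjStarAlgAut_uH (hH : ∀ k, (H k).IsHermitian) (X : Mat n) :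
    Unitary.conjStarAlgAut ℂ _ ⟨uH H φ, uH_mem_unitaryGroup φ hH⟩ X = uH H φ * X * uH' H φ := by
  rw [Unitary.conjStarAlgAut_apply, ← star_uH φ hH]

end EvolvedBoltzmann

theorem transpose_of_mem_unitaryGroup {n : ℕ} {u : Fin n → Fin n → ℂ}
    (hortho : ∀ k l, dotc (u k) (u l) = if k = l then 1 else 0) :
    (of u)ᵀ ∈ unitaryGroup (Fin n) ℂ := by
  rw [mem_unitaryGroup_iff']
  ext k l
  simpa [mul_apply, dotc, one_apply] using hortho k l

theorem dotc_mulVec_mulVec {n : ℕ} (W M : Mat n) (u : Fin n → Fin n → ℂ) (k l : Fin n) :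
    dotc (W *ᵥ u k) (M *ᵥ (W *ᵥ u l)) = ((W * (of u)ᵀ)ᴴ * M * (W * (of u)ᵀ)) k l := by
  have hcol : ∀ k, W *ᵥ u k = fun a => (W * (of u)ᵀ) a k := fun k => by
    ext a; simp [mulVec, dotProduct, mul_apply]
  rw [hcol, hcol]
  generalize W * (of u)ᵀ = Q
  simp only [dotc, mul_apply, mulVec, dotProduct, conjTranspose_apply, Finset.sum_mul,
    Finset.mul_sum, star_def]
  rw [Finset.sum_comm]
  simp only [mul_assoc]

theorem lamd_pos {n : ℕ} (μ : Fin n → ℝ) (k : Fin n) : 0 < lamd μ k :=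
  div_pos (Real.exp_pos _) (Finset.sum_pos (fun _ _ => Real.exp_pos _) ⟨k, Finset.mem_univ k⟩)

theorem qbm_mul_eq_mul_diagonal_lamd {n J : ℕ} {G : Fin J → Mat n} {θ : Fin J → ℝ} {U : Mat n}
    (hU : U ∈ unitaryGroup (Fin n) ℂ) {μ : Fin n → ℝ}
    (h : Gm G θ * U = U * diagonal (ofReal ∘ μ)) :
    qbm G θ * U = U * diagonal (ofReal ∘ lamd μ) := by
  have hexp : NormedSpace.exp (-Gm G θ) * U = U * diagonal fun k => (Real.exp (-μ k) : ℂ) := by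
    rw [exp_mul_eq_mul_exp_of_mul_eq_mul (Unitary.isUnit_coe (U := ⟨U, hU⟩))
      (by rw [Matrix.neg_mul, h, ← Matrix.mul_neg, diagonal_neg]), exp_diagonal]
    congr 2
    funext k
    simp [ofReal_exp, ← exp_eq_exp_ℂ]
  have hZ : Zpf G θ = ∑ m, Real.exp (-μ m) := by
    have hconj : NormedSpace.exp (-Gm G θ)
        = U * (diagonal fun k => (Real.exp (-μ k) : ℂ)) * star U := by
      rw [← hexp, Matrix.mul_assoc, Unitary.mul_star_self_of_mem hU, Matrix.mul_one]
    rw [Zpf, hconj, trace_mul_cycle, Unitary.star_mul_self_of_mem hU, Matrix.one_mul,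
      trace_diagonal, ← ofReal_sum, ofReal_re]
  rw [qbm, Matrix.smul_mul, hexp, hZ, ← Matrix.mul_smul, ← diagonal_smul]
  congr 2
  funext k
  simp [lamd, div_eq_inv_mul]

theorem stmt11_general {n J K : ℕ}
    (G : Fin J → Mat n) (H : Fin K → Mat n)
    (hH : ∀ k, (H k).IsHermitian)
    (θ : Fin J → ℝ) (φ : Fin K → ℝ)
    (u : Fin n → Fin n → ℂ) (μ : Fin n → ℝ)
    (hortho : ∀ k l, dotc (u k) (u l) = if k = l then 1 else 0)
    (heig : ∀ k, (Gm G θ).mulVec (u k) = (μ k : ℂ) • u k)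
    (i : Fin J) (j : Fin K) :
    ∑ k, ∑ l, ((2 / (lamd μ k + lamd μ l) : ℝ) : ℂ) *
        dotc ((uH H φ).mulVec (u k)) ((Pθ G H θ φ i).mulVec ((uH H φ).mulVec (u l))) *
        dotc ((uH H φ).mulVec (u l)) ((Pφ G H θ φ j).mulVec ((uH H φ).mulVec (u k)))
      = Complex.I *
          Matrix.trace ((chanΦ G θ (G i) * chanΨdag H φ (H j)
            - chanΨdag H φ (H j) * chanΦ G θ (G i)) * qbm G θ) := by
  have hU := transpose_of_mem_unitaryGroup hortho
  have hρ : qbm G θ * (of u)ᵀ = (of u)ᵀ * diagonal (ofReal ∘ lamd μ) :=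
    qbm_mul_eq_mul_diagonal_lamd hU (mul_eq_mul_diagonal_of_mulVec_eq_smul heig)
  have hω : eqbm G H θ φ * (uH H φ * (of u)ᵀ) = uH H φ * (of u)ᵀ * diagonal (ofReal ∘ lamd μ) := by
    rw [eqbm, Matrix.mul_assoc, ← Matrix.mul_assoc (uH' H φ), uH'_mul_uH, Matrix.one_mul,
      Matrix.mul_assoc, hρ, Matrix.mul_assoc]
  simp only [dotc_mulVec_mulVec]
  rw [Pθ, Pφ, sum_fisherBures_of_mul_eq_mul_diagonal
    (mul_mem (uH_mem_unitaryGroup φ hH) hU) (lamd_pos μ) hω, ← uH_mul_chanΨdag_mul_uH', eqbm]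
  simp only [← conjStarAlgAut_uH φ hH, ← map_mul, ← map_sub, trace_conjStarAlgAut]

/-- Fisher–Bures information matrix elements of the evolved quantum Boltzmann machine with
respect to mixed `θ` and `φ` parameters:
`I^FB_{ij}(θ,φ) = i⟨[Φ_θ(G_i),Ψ_φ†(H_j)]⟩_{ρ(θ)}`. -/
theorem stmt11 {n J K : ℕ} (hn : 1 ≤ n) (hJ : 1 ≤ J) (hK : 1 ≤ K)
    (G : Fin J → Mat n) (H : Fin K → Mat n)
    (hG : ∀ j, (G j).IsHermitian) (hH : ∀ k, (H k).IsHermitian)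
    (θ : Fin J → ℝ) (φ : Fin K → ℝ)
    (u : Fin n → Fin n → ℂ) (μ : Fin n → ℝ)
    (hortho : ∀ k l, dotc (u k) (u l) = if k = l then 1 else 0)
    (heig : ∀ k, (Gm G θ).mulVec (u k) = (μ k : ℂ) • u k)
    (i : Fin J) (j : Fin K) :
    ∑ k, ∑ l, ((2 / (lamd μ k + lamd μ l) : ℝ) : ℂ) *
        dotc ((uH H φ).mulVec (u k)) ((Pθ G H θ φ i).mulVec ((uH H φ).mulVec (u l))) *
        dotc ((uH H φ).mulVec (u l)) ((Pφ G H θ φ j).mulVec ((uH H φ).mulVec (u k)))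
      = Complex.I *
          Matrix.trace ((chanΦ G θ (G i) * chanΨdag H φ (H j)
            - chanΨdag H φ (H j) * chanΦ G θ (G i)) * qbm G θ) :=
  stmt11_general G H hH θ φ u μ hortho heig i j

end
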